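/- arXiv:1610.05869 — 3 statements merged into one kernel-verified Lean document; each statement's English description precedes it below -/
import Mathlib

section
/- Let N ≥ 1. The argmin chain (A_N(n); n ≥ 0) has the Markov property: for every n ≥ 0, all states i_0, i_1, …, i_n, j in {0, 1, …, N} such that ℙ(A_N(0) = i_0, A_N(1) = i_1, …, A_N(n) = i_n) > 0, one has ℙ(A_N(n+1) = j | A_N(0) = i_0, …, A_N(n) = i_n) = ℙ(A_N(n+1) = j | A_N(n) = i_n). -/
open MeasureTheory ProbabilityTheory Finset
open scoped Classical ProbabilityTheory

/-- Partial sums `S n = X 1 + ⋯ + X n` of the steps `X`. -/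
noncomputable def walkSum {Ω : Type*} (X : ℕ → Ω → ℝ) (n : ℕ) (ω : Ω) : ℝ :=
  ∑ i ∈ Finset.range n, X (i + 1) ω

/-- The argmin chain: the last `i ∈ {0,…,N}` at which `S (n+i)` equals the minimum of the
walk over the window `{n, …, n+N}`. -/
noncomputable def argminChain {Ω : Type*} (X : ℕ → Ω → ℝ) (N n : ℕ) (ω : Ω) : ℕ :=
  ((Finset.range (N + 1)).filter
    (fun i => ∀ k ∈ Finset.range (N + 1), walkSum X (n + i) ω ≤ walkSum X (n + k) ω)).sup id

/-- `p n = ℙ(S 1 ≥ 0, …, S n ≥ 0)`, as a real number. -/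
noncomputable def stayNonneg {Ω : Type*} [MeasurableSpace Ω] (μ : MeasureTheory.Measure Ω)
    (X : ℕ → Ω → ℝ) (n : ℕ) : ℝ :=
  (μ {ω | ∀ k ∈ Finset.Icc 1 n, 0 ≤ walkSum X k ω}).toReal

/-- `p̃ n = ℙ(S 1 > 0, …, S n > 0)`, as a real number. -/
noncomputable def stayPos {Ω : Type*} [MeasurableSpace Ω] (μ : MeasureTheory.Measure Ω)
    (X : ℕ → Ω → ℝ) (n : ℕ) : ℝ :=
  (μ {ω | ∀ k ∈ Finset.Icc 1 n, 0 < walkSum X k ω}).toReal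

/-- Pochhammer symbol `(θ)_{n↑} = θ (θ+1) ⋯ (θ+n-1)`. -/
noncomputable def poch (θ : ℝ) (n : ℕ) : ℝ := ∏ i ∈ Finset.range n, (θ + i)


/-! Let `M = n + i_n`, the position of the last minimum of the window at `n`. The past event
`{A_N(m) = i_m, m ≤ n}` is `B ∩ C`, where `B` depends only on the steps up to `M` and
`C = {S_t > S_M for M < t ≤ n + N}` only on the steps after `M`: on `C`, no point past `M` can be
the last minimum of a window starting at or before `n`. On this event `A_N(n+1)` is also a function
of the steps after `M`, because the points of the new window up to `M` lie above `S_M`, so only the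
walk restarted at `M` matters. Independence of the two blocks of steps cancels `ℙ(B)` in the
conditional probability, leaving a quantity that depends on the past only through `i_n`. -/

-- an offset in `{0, …, N}`, not a position of the path
noncomputable def lastArgminOn (f : ℕ → ℝ) (N m : ℕ) : ℕ :=
  ((range (N + 1)).filter fun a => ∀ k ∈ range (N + 1), f (m + a) ≤ f (m + k)).sup id

theorem argminChain_eq_lastArgminOn {Ω : Type*} (X : ℕ → Ω → ℝ) (N m : ℕ) (ω : Ω) :
    argminChain X N m ω = lastArgminOn (walkSum X · ω) N m :=
  rfl

theorem lastArgminOn_eq_iff {f : ℕ → ℝ} {N m a : ℕ} :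
    lastArgminOn f N m = a ↔
      a ≤ N ∧ ∀ k ≤ N, f (m + a) ≤ f (m + k) ∧ (a < k → f (m + a) < f (m + k)) := by
  set F := (range (N + 1)).filter fun a => ∀ k ∈ range (N + 1), f (m + a) ≤ f (m + k)
  have mem_F {b : ℕ} : b ∈ F ↔ b ≤ N ∧ ∀ k ≤ N, f (m + b) ≤ f (m + k) := by
    simp only [F, mem_filter, mem_range, Nat.lt_succ_iff]
  change F.sup id = a ↔ _
  constructor
  · rintro rfl
    have hF : F.Nonempty := by
      obtain ⟨b, hb, hmin⟩ :=
        exists_min_image (range (N + 1)) (fun k => f (m + k)) nonempty_range_add_one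
      refine ⟨b, mem_F.2 ⟨Nat.lt_succ_iff.1 (mem_range.1 hb), fun k hk => hmin k ?_⟩⟩
      exact mem_range.2 (Nat.lt_succ_of_le hk)
    obtain ⟨b, hb, hsup⟩ := exists_mem_eq_sup F hF id
    obtain ⟨hbN, hmin⟩ := mem_F.1 hb
    rw [hsup, id]
    refine ⟨hbN, fun k hk => ⟨hmin k hk, fun hbk => lt_of_not_ge fun hkb => ?_⟩⟩
    have hkF : k ∈ F := mem_F.2 ⟨hk, fun l hl => hkb.trans (hmin l hl)⟩
    exact hbk.not_ge (hsup ▸ le_sup (f := id) hkF :)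
  · rintro ⟨haN, hmin⟩
    have haF : a ∈ F := mem_F.2 ⟨haN, fun k hk => (hmin k hk).1⟩
    refine le_antisymm (Finset.sup_le fun b hb => ?_) (le_sup (f := id) haF)
    obtain ⟨hbN, hbmin⟩ := mem_F.1 hb
    exact le_of_not_gt fun hab => ((hmin b hbN).2 hab).not_ge (hbmin a haN)

theorem lastArgminOn_eq_of_eqOn_of_lt {f g : ℕ → ℝ} {N m M : ℕ} (hmM : m ≤ M)
    (hfg : ∀ t ≤ M, f t = g t) (hf : ∀ t, M < t → t ≤ m + N → f M < f t)
    (hg : ∀ t, M < t → t ≤ m + N → g M < g t) :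
    lastArgminOn g N m = lastArgminOn f N m := by
  obtain ⟨haN, hmin⟩ := lastArgminOn_eq_iff.1 (rfl : lastArgminOn f N m = _)
  set a := lastArgminOn f N m
  have haM : m + a ≤ M := by
    by_contra! h
    have := (hmin (M - m) (by omega)).1
    rw [Nat.add_sub_cancel' hmM] at this
    linarith [hf (m + a) h (by omega)]
  refine lastArgminOn_eq_iff.2 ⟨haN, fun k hk => ?_⟩
  rw [← hfg _ haM]
  by_cases hkM : m + k ≤ M
  · rw [← hfg _ hkM]
    exact hmin k hk
  · have hlt := hg (m + k) (by omega) (by omega)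
    have hle := (hmin (M - m) (by omega)).1
    rw [Nat.add_sub_cancel' hmM, hfg M le_rfl] at hle
    exact ⟨by linarith, fun _ => by linarith⟩

theorem lastArgminOn_eq_of_eq_add_of_flat {f g : ℕ → ℝ} {N m M : ℕ} {c : ℝ} (hMN : M ≤ m + N)
    (hshift : ∀ t, M ≤ t → g t = f t + c)
    (hflat : ∀ t, m ≤ t → t ≤ M → g t = g M ∧ f M ≤ f t) :
    lastArgminOn g N m = lastArgminOn f N m := by
  obtain ⟨haN, hmin⟩ := lastArgminOn_eq_iff.1 (rfl : lastArgminOn f N m = _)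
  set a := lastArgminOn f N m
  have haM : M ≤ m + a := by
    by_contra! h
    have := (hmin (M - m) (by omega)).2 (by omega)
    rw [Nat.add_sub_cancel' (by omega)] at this
    linarith [(hflat (m + a) (by omega) h.le).2]
  refine lastArgminOn_eq_iff.2 ⟨haN, fun k hk => ?_⟩
  rw [hshift _ haM]
  by_cases hkM : M ≤ m + k
  · rw [hshift _ hkM]
    exact ⟨by linarith [(hmin k hk).1], fun hak => by linarith [(hmin k hk).2 hak]⟩
  · have hle := (hmin (M - m) (by omega)).1
    rw [Nat.add_sub_cancel' (by omega)] at hle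
    rw [(hflat (m + k) (by omega) (by omega)).1, hshift M le_rfl]
    exact ⟨by linarith, fun hak => by omega⟩

section Walk

variable {Ω : Type*}

theorem walkSum_succ (X : ℕ → Ω → ℝ) (t : ℕ) (ω : Ω) :
    walkSum X (t + 1) ω = walkSum X t ω + X (t + 1) ω :=
  sum_range_succ _ _

-- after `M` the steps are replaced by `1`, so the walk increases strictly there
def stepsUpTo (X : ℕ → Ω → ℝ) (M : ℕ) : ℕ → Ω → ℝ := fun l ω => if l ≤ M then X l ω else 1

def stepsAfter (X : ℕ → Ω → ℝ) (M : ℕ) : ℕ → Ω → ℝ := fun l ω => if M < l then X l ω else 0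

theorem walkSum_stepsUpTo_of_le (X : ℕ → Ω → ℝ) {M t : ℕ} (ht : t ≤ M) (ω : Ω) :
    walkSum (stepsUpTo X M) t ω = walkSum X t ω :=
  sum_congr rfl fun l hl => if_pos (by rw [mem_range] at hl; omega)

theorem walkSum_stepsUpTo_lt (X : ℕ → Ω → ℝ) {M t : ℕ} (ht : M < t) (ω : Ω) :
    walkSum (stepsUpTo X M) M ω < walkSum (stepsUpTo X M) t ω := by
  induction t, ht using Nat.le_induction with
  | base => simp [walkSum_succ, stepsUpTo]
  | succ t hMt ih =>
    rw [walkSum_succ, stepsUpTo, if_neg (by omega)]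
    linarith

theorem walkSum_stepsAfter_of_le (X : ℕ → Ω → ℝ) {M t : ℕ} (ht : t ≤ M) (ω : Ω) :
    walkSum (stepsAfter X M) t ω = 0 :=
  sum_eq_zero fun l hl => if_neg (by rw [mem_range] at hl; omega)

theorem walkSum_stepsAfter_of_ge (X : ℕ → Ω → ℝ) {M t : ℕ} (ht : M ≤ t) (ω : Ω) :
    walkSum (stepsAfter X M) t ω = walkSum X t ω - walkSum X M ω := by
  induction t, ht using Nat.le_induction with
  | base => simp [walkSum_stepsAfter_of_le]
  | succ t hMt ih =>
    rw [walkSum_succ, walkSum_succ, ih, stepsAfter, if_pos (by omega)]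
    ring

end Walk

section Measurability

variable {Ω : Type*}

theorem measurable_walkSum {m : MeasurableSpace Ω} {X : ℕ → Ω → ℝ}
    (hX : ∀ l, Measurable (X l)) (t : ℕ) : Measurable (walkSum X t) :=
  Finset.measurable_sum _ fun l _ => hX (l + 1)

theorem measurableSet_argminChain_eq {m : MeasurableSpace Ω} {X : ℕ → Ω → ℝ}
    (hX : ∀ l, Measurable (X l)) (N k a : ℕ) :
    MeasurableSet {ω | argminChain X N k ω = a} := by
  simp only [argminChain_eq_lastArgminOn, lastArgminOn_eq_iff, Set.ofPred_and, Set.ofPred_forall]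
  have hS := measurable_walkSum hX
  exact (MeasurableSet.const _).inter (.iInter fun l => .iInter fun _ =>
    (measurableSet_le (hS _) (hS _)).inter (.iInter fun _ => measurableSet_lt (hS _) (hS _)))

abbrev stepsSigma (X : ℕ → Ω → ℝ) (S : Set ℕ) : MeasurableSpace Ω :=
  ⨆ l ∈ S, MeasurableSpace.comap (X l) inferInstance

theorem measurable_stepsSigma (X : ℕ → Ω → ℝ) {S : Set ℕ} {l : ℕ} (hl : l ∈ S) :
    Measurable[stepsSigma X S] (X l) :=
  Measurable.of_comap_le (le_iSup₂ (f := fun l _ => MeasurableSpace.comap (X l) _) l hl)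

theorem measurable_stepsUpTo (X : ℕ → Ω → ℝ) (M l : ℕ) :
    Measurable[stepsSigma X (Set.Iic M)] (stepsUpTo X M l) := by
  by_cases hl : l ≤ M
  · rw [show stepsUpTo X M l = X l from funext fun _ => if_pos hl]
    exact measurable_stepsSigma X (S := Set.Iic M) hl
  · rw [show stepsUpTo X M l = 1 from funext fun _ => if_neg hl]
    exact measurable_const

theorem measurable_stepsAfter (X : ℕ → Ω → ℝ) (M l : ℕ) :
    Measurable[stepsSigma X (Set.Ioi M)] (stepsAfter X M l) := by
  by_cases hl : M < l
  · rw [show stepsAfter X M l = X l from funext fun _ => if_pos hl]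
    exact measurable_stepsSigma X (S := Set.Ioi M) hl
  · rw [show stepsAfter X M l = 0 from funext fun _ => if_neg hl]
    exact measurable_const

theorem stepsSigma_le [MeasurableSpace Ω] {X : ℕ → Ω → ℝ} (hX : ∀ l, Measurable (X l))
    (S : Set ℕ) : stepsSigma X S ≤ ‹MeasurableSpace Ω› :=
  iSup₂_le fun l _ => (hX l).comap_le

theorem indep_stepsSigma [MeasurableSpace Ω] {μ : Measure Ω} {X : ℕ → Ω → ℝ}
    (hX : ∀ l, Measurable (X l)) (hindep : iIndepFun X μ) {S T : Set ℕ} (hST : Disjoint S T) :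
    Indep (stepsSigma X S) (stepsSigma X T) μ :=
  indep_iSup_of_disjoint (fun l => (hX l).comap_le) ((iIndepFun_iff_iIndep _ _ _).1 hindep) hST

end Measurability

theorem cond_inter_eq_cond_of_indep {Ω : Type*} [mΩ : MeasurableSpace Ω] {μ : Measure Ω}
    [IsFiniteMeasure μ] {m₁ m₂ : MeasurableSpace Ω} (h₁ : m₁ ≤ mΩ) (h₂ : m₂ ≤ mΩ)
    (hind : Indep m₁ m₂ μ) {A B C F : Set Ω} (hB : MeasurableSet[m₁] B)
    (hC : MeasurableSet[m₂] C) (hF : MeasurableSet[m₂] F) (hBC : μ (B ∩ C) ≠ 0)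
    (hA : B ∩ C ∩ A = B ∩ (C ∩ F)) :
    μ[A | B ∩ C] = μ[F | C] := by
  have hmul := (Indep_iff _ _ _).1 hind
  have hB0 : μ B ≠ 0 := fun h => hBC (measure_mono_null Set.inter_subset_left h)
  rw [cond_apply ((h₁ _ hB).inter (h₂ _ hC)), cond_apply (h₂ _ hC), hA,
    hmul _ _ hB (hC.inter hF), hmul _ _ hB hC,
    ENNReal.mul_inv (.inl hB0) (.inl (measure_ne_top _ _)), mul_mul_mul_comm,
    ENNReal.inv_mul_cancel hB0 (measure_ne_top _ _), one_mul]

section ArgminChain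

variable {Ω : Type*} {X : ℕ → Ω → ℝ} {N n a : ℕ} {ω : Ω}

theorem argminChain_eq_iff :
    argminChain X N n ω = a ↔ a ≤ N ∧ ∀ k ≤ N, walkSum X (n + a) ω ≤ walkSum X (n + k) ω ∧
      (a < k → walkSum X (n + a) ω < walkSum X (n + k) ω) := by
  rw [argminChain_eq_lastArgminOn, lastArgminOn_eq_iff]

theorem walkSum_lt_of_argminChain_eq (h : argminChain X N n ω = a) {t : ℕ} (h₁ : n + a < t)
    (h₂ : t ≤ n + N) : walkSum X (n + a) ω < walkSum X t ω := by
  have := ((argminChain_eq_iff.1 h).2 (t - n) (by omega)).2 (by omega)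
  rwa [Nat.add_sub_cancel' (by omega)] at this

theorem argminChain_stepsUpTo {m M : ℕ} (hmM : m ≤ M)
    (hM : ∀ t, M < t → t ≤ m + N → walkSum X M ω < walkSum X t ω) :
    argminChain (stepsUpTo X M) N m ω = argminChain X N m ω :=
  lastArgminOn_eq_of_eqOn_of_lt hmM (fun _ ht => (walkSum_stepsUpTo_of_le X ht ω).symm) hM
    fun _ ht _ => walkSum_stepsUpTo_lt X ht ω

theorem argminChain_succ_stepsAfter (h : argminChain X N n ω = a) :
    argminChain (stepsAfter X (n + a)) N (n + 1) ω = argminChain X N (n + 1) ω := by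
  obtain ⟨haN, hmin⟩ := argminChain_eq_iff.1 h
  refine lastArgminOn_eq_of_eq_add_of_flat (f := (walkSum X · ω))
    (g := (walkSum (stepsAfter X (n + a)) · ω)) (M := n + a) (c := -walkSum X (n + a) ω) (by omega)
    (fun t ht => by rw [walkSum_stepsAfter_of_ge X ht, sub_eq_add_neg]) fun t ht₁ ht₂ => ?_
  rw [walkSum_stepsAfter_of_le X ht₂, walkSum_stepsAfter_of_le X le_rfl]
  have := (hmin (t - n) (by omega)).1
  rw [Nat.add_sub_cancel' (by omega)] at this
  exact ⟨rfl, this⟩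

end ArgminChain

theorem cond_argminChain_succ {Ω : Type*} [MeasurableSpace Ω] (μ : Measure Ω)
    [IsFiniteMeasure μ] {X : ℕ → Ω → ℝ} (hmeas : ∀ l, Measurable (X l))
    (hindep : iIndepFun X μ) (N n : ℕ) (i : ℕ → ℕ) (j : ℕ) {J : Finset ℕ}
    (hJ : ∀ m ∈ J, m ≤ n) (hnJ : n ∈ J)
    (hpos : μ (⋂ m ∈ J, {ω | argminChain X N m ω = i m}) ≠ 0) :
    μ[{ω | argminChain X N (n + 1) ω = j} | ⋂ m ∈ J, {ω | argminChain X N m ω = i m}] =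
      μ[{ω | argminChain (stepsAfter X (n + i n)) N (n + 1) ω = j} |
        ⋂ t ∈ Ioc (n + i n) (n + N), {ω | 0 < walkSum (stepsAfter X (n + i n)) t ω}] := by
  set M := n + i n
  set B := ⋂ m ∈ J, {ω | argminChain (stepsUpTo X M) N m ω = i m}
  set C := ⋂ t ∈ Ioc M (n + N), {ω | 0 < walkSum (stepsAfter X M) t ω}
  have mem_C {ω : Ω} : ω ∈ C ↔ ∀ t, M < t → t ≤ n + N → walkSum X M ω < walkSum X t ω := by
    simp only [C, Set.mem_iInter, Set.mem_ofPred_eq, mem_Ioc, and_imp]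
    refine forall₃_congr fun t h₁ _ => ?_
    rw [walkSum_stepsAfter_of_ge X h₁.le, sub_pos]
  have agree : ∀ ω ∈ C, ∀ m ∈ J, argminChain (stepsUpTo X M) N m ω = argminChain X N m ω :=
    fun ω hC m hm => argminChain_stepsUpTo (by have := hJ m hm; omega)
      fun t h₁ h₂ => mem_C.1 hC t h₁ (by have := hJ m hm; omega)
  have hE : ⋂ m ∈ J, {ω | argminChain X N m ω = i m} = B ∩ C := by
    ext ω
    simp only [B, Set.mem_iInter, Set.mem_inter_iff, Set.mem_ofPred_eq]
    constructor
    · intro h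
      have hC : ω ∈ C := mem_C.2 fun t => walkSum_lt_of_argminChain_eq (h n hnJ)
      exact ⟨fun m hm => (agree ω hC m hm).trans (h m hm), hC⟩
    · rintro ⟨h, hC⟩ m hm
      exact (agree ω hC m hm).symm.trans (h m hm)
  have hnext : B ∩ C ∩ {ω | argminChain X N (n + 1) ω = j} =
      B ∩ (C ∩ {ω | argminChain (stepsAfter X M) N (n + 1) ω = j}) := by
    rw [← Set.inter_assoc, ← hE]
    ext ω
    simp only [Set.mem_inter_iff, Set.mem_ofPred_eq, and_congr_right_iff]
    intro hω
    rw [argminChain_succ_stepsAfter (Set.mem_iInter₂.1 hω n hnJ)]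
  have hB : MeasurableSet[stepsSigma X (Set.Iic M)] B :=
    Finset.measurableSet_biInter J fun m _ =>
      measurableSet_argminChain_eq (measurable_stepsUpTo X M) N m (i m)
  have hC : MeasurableSet[stepsSigma X (Set.Ioi M)] C :=
    Finset.measurableSet_biInter _ fun t _ =>
      measurableSet_lt measurable_const (measurable_walkSum (measurable_stepsAfter X M) t)
  rw [hE] at hpos ⊢
  exact cond_inter_eq_cond_of_indep (stepsSigma_le hmeas _) (stepsSigma_le hmeas _)
    (indep_stepsSigma hmeas hindep (Set.Iic_disjoint_Ioi le_rfl)) hB hC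
    (measurableSet_argminChain_eq (measurable_stepsAfter X M) N (n + 1) j) hpos hnext

theorem argminChain_markov_general
    {Ω : Type*} [MeasurableSpace Ω] (μ : MeasureTheory.Measure Ω) [IsProbabilityMeasure μ]
    (X : ℕ → Ω → ℝ) (hmeas : ∀ i, Measurable (X i))
    (hindep : iIndepFun X μ)
    (N : ℕ) (n : ℕ) (i : ℕ → ℕ) (j : ℕ)
    (hpos : 0 < μ (⋂ m ∈ Finset.range (n + 1), {ω | argminChain X N m ω = i m})) :
    ((μ[|⋂ m ∈ Finset.range (n + 1), {ω | argminChain X N m ω = i m}])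
        {ω | argminChain X N (n + 1) ω = j}).toReal
      = ((μ[|{ω | argminChain X N n ω = i n}])
        {ω | argminChain X N (n + 1) ω = j}).toReal := by
  have hlast : {ω | argminChain X N n ω = i n} =
      ⋂ m ∈ ({n} : Finset ℕ), {ω | argminChain X N m ω = i m} := by
    simp
  have hsub : ⋂ m ∈ range (n + 1), {ω | argminChain X N m ω = i m} ⊆
      {ω | argminChain X N n ω = i n} :=
    Set.biInter_subset_of_mem (by simp)
  rw [cond_argminChain_succ μ hmeas hindep N n i j (by simp) (by simp) hpos.ne',
    hlast, cond_argminChain_succ μ hmeas hindep N n i j (by simp) (by simp)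
      (hlast ▸ (hpos.trans_le (measure_mono hsub)).ne')]

/-- The argmin chain has the Markov property: conditionally on the whole past
`A_N(0) = i_0, …, A_N(n) = i_n` (an event of positive probability), the probability that
`A_N(n+1) = j` only depends on `i_n`. -/
theorem argminChain_markov
    {Ω : Type*} [MeasurableSpace Ω] (μ : MeasureTheory.Measure Ω) [IsProbabilityMeasure μ]
    (X : ℕ → Ω → ℝ) (hmeas : ∀ i, Measurable (X i))
    (hindep : iIndepFun X μ)
    (hident : ∀ i, IdentDistrib (X i) (X 1) μ μ)
    (N : ℕ) (hN : 1 ≤ N) (n : ℕ) (i : ℕ → ℕ) (j : ℕ)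
    (hi : ∀ m, m ≤ n → i m ≤ N) (hj : j ≤ N)
    (hpos : 0 < μ (⋂ m ∈ Finset.range (n + 1), {ω | argminChain X N m ω = i m})) :
    ((μ[|⋂ m ∈ Finset.range (n + 1), {ω | argminChain X N m ω = i m}])
        {ω | argminChain X N (n + 1) ω = j}).toReal
      = ((μ[|{ω | argminChain X N n ω = i n}])
        {ω | argminChain X N (n + 1) ω = j}).toReal :=
  argminChain_markov_general μ X hmeas hindep N n i j hpos
end

section
/- Let θ be a real number and N ≥ 1, and set p_n := (θ)_{n↑}/n! for n ≥ 0. Then Σ_{j=0}^{N−1} p_j p_{N−j} − Σ_{j=0}^{N−1} p_{j+1} p_{N−j} = [ (N + 2θ − 1)(θ)_{N↑} + (1 − 2θ)(2θ)_{N↑} ] / (N+1)!. -/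
open MeasureTheory ProbabilityTheory Finset
open scoped Classical ProbabilityTheory

/-!
With `p^θ_n = (θ)_{n↑}/n!`, the Chu–Vandermonde identity for rising factorials says that
`p^a * p^b = p^(a+b)` as power series. Both sums are therefore truncations of coefficients of
`(p^θ)² = p^(2θ)`: the first is `p^(2θ)_N - p^θ_N` and the second `p^(2θ)_(N+1) - 2 p^θ_(N+1)`.
The identity follows from `(n+1) p^θ_(n+1) = (θ+n) p^θ_n`.
-/

open Polynomial

lemma poch_zero (θ : ℝ) : poch θ 0 = 1 :=
  prod_range_zero _

lemma poch_succ (θ : ℝ) (n : ℕ) : poch θ (n + 1) = poch θ n * (θ + n) :=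
  prod_range_succ _ n

lemma poch_eq_smeval_ascPochhammer (θ : ℝ) (n : ℕ) :
    poch θ n = (ascPochhammer ℕ n).smeval θ := by
  rw [ascPochhammer_smeval_eq_eval]
  induction n with
  | zero => simp [poch_zero]
  | succ n ih => rw [poch_succ, ih, ascPochhammer_succ_eval]

lemma poch_eq_neg_one_pow_mul_smeval_descPochhammer (θ : ℝ) (n : ℕ) :
    poch θ n = (-1) ^ n * (descPochhammer ℤ n).smeval (-θ) := by
  rw [← neg_neg θ, poch_eq_smeval_ascPochhammer, ascPochhammer_smeval_neg_eq_descPochhammer,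
    neg_neg, Units.smul_def, zsmul_eq_mul, Int.cast_negOnePow_natCast]

/-- The sign change `(a)_{n↑} = (-1)ⁿ (-a)_{n↓}` reduces this to the Chu–Vandermonde identity
for falling factorials. -/
lemma poch_add (a b : ℝ) (N : ℕ) :
    poch (a + b) N = ∑ ij ∈ antidiagonal N, N.choose ij.1 * (poch a ij.1 * poch b ij.2) := by
  rw [poch_eq_neg_one_pow_mul_smeval_descPochhammer, neg_add,
    Ring.descPochhammer_smeval_add N (Commute.all _ _), mul_sum]
  refine sum_congr rfl fun ⟨i, j⟩ hij => ?_
  rw [HasAntidiagonal.mem_antidiagonal] at hij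
  rw [poch_eq_neg_one_pow_mul_smeval_descPochhammer a,
    poch_eq_neg_one_pow_mul_smeval_descPochhammer b, ← hij, pow_add]
  ring

lemma sum_range_succ_poch_div_factorial_mul (a b : ℝ) (N : ℕ) :
    ∑ j ∈ range (N + 1), poch a j / j.factorial * (poch b (N - j) / (N - j).factorial)
      = poch (a + b) N / N.factorial := by
  rw [poch_add, sum_div, ← Nat.sum_antidiagonal_eq_sum_range_succ fun i j =>
    poch a i / i.factorial * (poch b j / j.factorial)]
  refine sum_congr rfl fun ⟨i, j⟩ hij => ?_
  rw [HasAntidiagonal.mem_antidiagonal] at hij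
  subst hij
  rw [Nat.cast_add_choose]
  field_simp

lemma poch_succ_div_factorial_succ (θ : ℝ) (n : ℕ) :
    poch θ (n + 1) / (n + 1).factorial = poch θ n / n.factorial * ((θ + n) / (n + 1)) := by
  rw [poch_succ, Nat.factorial_succ]
  push_cast
  field_simp

theorem pochhammer_sum_identity_general (θ : ℝ) (N : ℕ) :
    (∑ j ∈ Finset.range N,
        poch θ j / Nat.factorial j * (poch θ (N - j) / Nat.factorial (N - j)))
      - ∑ j ∈ Finset.range N,
        poch θ (j + 1) / Nat.factorial (j + 1) * (poch θ (N - j) / Nat.factorial (N - j))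
      = (((N : ℝ) + 2 * θ - 1) * poch θ N + (1 - 2 * θ) * poch (2 * θ) N)
          / Nat.factorial (N + 1) := by
  have first_sum : ∑ j ∈ range N, poch θ j / j.factorial * (poch θ (N - j) / (N - j).factorial)
      = poch (2 * θ) N / N.factorial - poch θ N / N.factorial := by
    have h := sum_range_succ_poch_div_factorial_mul θ θ N
    rw [sum_range_succ, ← two_mul] at h
    simp only [Nat.sub_self, poch_zero, Nat.factorial_zero, Nat.cast_one, div_one, mul_one] at h
    linarith
  have second_sum : ∑ j ∈ range N,
        poch θ (j + 1) / (j + 1).factorial * (poch θ (N - j) / (N - j).factorial)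
      = poch (2 * θ) (N + 1) / (N + 1).factorial - 2 * (poch θ (N + 1) / (N + 1).factorial) := by
    have h := sum_range_succ_poch_div_factorial_mul θ θ (N + 1)
    rw [sum_range_succ', sum_range_succ, ← two_mul] at h
    simp only [Nat.sub_self, Nat.add_sub_add_right, Nat.sub_zero, poch_zero, Nat.factorial_zero,
      Nat.cast_one, div_one, mul_one, one_mul] at h
    linarith
  rw [first_sum, second_sum, poch_succ_div_factorial_succ, poch_succ_div_factorial_succ,
    Nat.factorial_succ]
  push_cast
  field_simp
  ring

/-- The algebraic identity behind Lemma 2.3: with `p_n = (θ)_{n↑}/n!`,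
`Σ_{j=0}^{N-1} p_j p_{N-j} - Σ_{j=0}^{N-1} p_{j+1} p_{N-j}
  = [(N + 2θ - 1)(θ)_{N↑} + (1 - 2θ)(2θ)_{N↑}] / (N+1)!`. -/
theorem pochhammer_sum_identity (θ : ℝ) (N : ℕ) (hN : 1 ≤ N) :
    (∑ j ∈ Finset.range N,
        poch θ j / Nat.factorial j * (poch θ (N - j) / Nat.factorial (N - j)))
      - ∑ j ∈ Finset.range N,
        poch θ (j + 1) / Nat.factorial (j + 1) * (poch θ (N - j) / Nat.factorial (N - j))
      = (((N : ℝ) + 2 * θ - 1) * poch θ N + (1 - 2 * θ) * poch (2 * θ) N)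
          / Nat.factorial (N + 1) :=
  pochhammer_sum_identity_general θ N
end

section
/- (Feller) Let (S_n) be the simple symmetric random walk, i.e. the X_i are i.i.d. with ℙ(X_i = 1) = ℙ(X_i = −1) = 1/2. Then for every n ≥ 1: ℙ(S_1 > 0, …, S_{2n} > 0) = ℙ(S_1 > 0, …, S_{2n+1} > 0) = (1/2)_{n↑} / (2 · n!), and ℙ(S_1 ≥ 0, …, S_{2n−1} ≥ 0) = ℙ(S_1 ≥ 0, …, S_{2n} ≥ 0) = (1/2)_{n↑} / n!. -/
open MeasureTheory ProbabilityTheory Finset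
open scoped Classical ProbabilityTheory

/-!
Encode the first `m` steps by `v : Fin m → Bool` (`true` for an up-step). Almost surely the walk
is the lattice path of `v`, and by independence each `v` has probability `2⁻¹ ^ m`, so both
probabilities are numbers of lattice paths divided by `2 ^ m`. A path of length `m + 1` stays
positive iff it starts upwards and then stays nonnegative, whence `p̃ (m + 1) = p m / 2`. By the
reflection principle, the nonnegative paths of length `m` ending at `j` number
`N m j - N m (j + 2)`, where `N m d` counts all paths ending at `d`; summing over `j` telescopes to
`N m 0 + N m 1 = m.choose ((m + 1) / 2)`. It remains to use `4 ^ n (1/2)_{n↑} = C(2n, n) n!` and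
`C(2n, n) = 2 C(2n - 1, n)`.
-/

namespace SimpleRandomWalk

section Paths

variable {m : ℕ}

def step (b : Bool) : ℤ := if b then 1 else -1

lemma step_eq_two_mul_toNat_sub_one (b : Bool) : step b = 2 * b.toNat - 1 := by
  cases b <;> rfl

noncomputable def height (v : Fin m → Bool) (k : ℕ) : ℤ :=
  ∑ i ∈ (univ.filter fun i : Fin m => (i : ℕ) < k), step (v i)

@[simp] lemma height_zero (v : Fin m → Bool) : height v 0 = 0 := by
  simp [height]

@[simp] lemma height_cons (b : Bool) (w : Fin m → Bool) (k : ℕ) :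
    height (Fin.cons b w : Fin (m + 1) → Bool) (k + 1) = step b + height w k := by
  simp [height, sum_filter, Fin.sum_univ_succ]

lemma height_self (v : Fin m → Bool) : height v m = 2 * ∑ i, (v i).toNat - m := by
  simp [height, step_eq_two_mul_toNat_sub_one, sum_sub_distrib, ← mul_sum]

lemma height_self_le (v : Fin m → Bool) : height v m ≤ m := by
  have : ∑ i, (v i).toNat ≤ m := by
    simpa using sum_le_card_nsmul univ (fun i => (v i).toNat) 1 fun i _ => Bool.toNat_le _
  rw [height_self]
  omega

lemma card_filter_fin_succ (P : (Fin (m + 1) → Bool) → Prop) [DecidablePred P] :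
    #{v | P v} = #{w : Fin m → Bool | P (Fin.cons true w)} + #{w | P (Fin.cons false w)} := by
  simp only [card_filter]
  rw [← (Fin.consEquiv fun _ => Bool).sum_comp, Fintype.sum_prod_type, Fintype.sum_bool]
  rfl

lemma card_sum_toNat_eq_choose (m s : ℕ) :
    #{v : Fin m → Bool | ∑ i, (v i).toNat = s} = m.choose s := by
  induction m generalizing s with
  | zero => cases s <;> simp
  | succ m ih =>
    simp only [card_filter_fin_succ, Fin.sum_univ_succ, Fin.cons_zero, Fin.cons_succ,
      Bool.toNat_true, Bool.toNat_false, zero_add]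
    cases s with
    | zero => rw [ih 0]; simp [add_comm 1]
    | succ s => simp [add_comm 1, ih, Nat.choose_succ_succ]

noncomputable def pathCount (m : ℕ) (d : ℤ) : ℕ := #{v : Fin m → Bool | height v m = d}

noncomputable def nonnegPathCount (m : ℕ) (a j : ℤ) : ℕ :=
  #{v : Fin m → Bool | (∀ k ≤ m, 0 ≤ a + height v k) ∧ a + height v m = j}

lemma pathCount_zero (d : ℤ) : pathCount 0 d = if d = 0 then 1 else 0 := by
  simp only [pathCount, height_zero]
  split_ifs <;> simp [*, eq_comm]

lemma pathCount_succ (m : ℕ) (d : ℤ) :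
    pathCount (m + 1) d = pathCount m (d - 1) + pathCount m (d + 1) := by
  simp only [pathCount, card_filter_fin_succ, height_cons, step]
  congr 2 <;> ext <;> simp <;> omega

lemma pathCount_eq_zero {d : ℤ} (hd : m < d) : pathCount m d = 0 := by
  rw [pathCount, card_eq_zero, filter_eq_empty_iff]
  exact fun v _ => ((height_self_le v).trans_lt hd).ne

lemma pathCount_zero_add_pathCount_one (m : ℕ) :
    pathCount m 0 + pathCount m 1 = m.choose ((m + 1) / 2) := by
  rw [pathCount, pathCount, ← card_union_of_disjoint, ← filter_or, ← card_sum_toNat_eq_choose]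
  · congr 1
    ext v
    simp only [mem_filter, mem_univ, true_and, height_self]
    omega
  · exact disjoint_filter.2 fun v _ h => by rw [h]; decide

lemma nonnegPathCount_zero (a j : ℤ) :
    nonnegPathCount 0 a j = if 0 ≤ a ∧ a = j then 1 else 0 := by
  simp only [nonnegPathCount, Nat.le_zero, forall_eq, height_zero, add_zero]
  split_ifs with h
  · obtain ⟨ha, rfl⟩ := h
    simp [ha]
  · simp [h]

lemma nonnegPathCount_of_neg {a : ℤ} (ha : a < 0) (j : ℤ) : nonnegPathCount m a j = 0 := by
  rw [nonnegPathCount, card_eq_zero, filter_eq_empty_iff]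
  exact fun v _ h => ha.not_ge (by simpa using h.1 0 m.zero_le)

lemma nonnegPathCount_succ {a : ℤ} (ha : 0 ≤ a) (j : ℤ) :
    nonnegPathCount (m + 1) a j = nonnegPathCount m (a + 1) j + nonnegPathCount m (a - 1) j := by
  simp only [nonnegPathCount, card_filter_fin_succ, ← Nat.lt_succ_iff, Nat.forall_lt_succ_left,
    height_zero, height_cons, step]
  congr 2 <;> ext <;> simp [ha, add_assoc, sub_eq_add_neg]

/-- Allowing `a = -1`, where both sides vanish, lets the induction pass from `a` to `a - 1`. -/
theorem nonnegPathCount_eq_sub (m : ℕ) {a j : ℤ} (ha : -1 ≤ a) (hj : 0 ≤ j) :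
    (nonnegPathCount m a j : ℤ) = pathCount m (j - a) - pathCount m (j + a + 2) := by
  induction m generalizing a with
  | zero =>
    rw [nonnegPathCount_zero, pathCount_zero, pathCount_zero]
    split_ifs <;> simp <;> omega
  | succ m ih =>
    rcases ha.eq_or_lt with rfl | ha
    · rw [nonnegPathCount_of_neg (by norm_num)]
      ring_nf
    rw [nonnegPathCount_succ (by omega), pathCount_succ, pathCount_succ]
    push_cast
    rw [ih (by omega), ih (by omega)]
    ring_nf

lemma card_nonneg_eq_sum (m : ℕ) :
    #{v : Fin m → Bool | ∀ k ≤ m, 0 ≤ height v k} =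
      ∑ j ∈ range (m + 1), nonnegPathCount m 0 j := by
  rw [card_eq_sum_card_fiberwise (f := fun v => (height v m).toNat) (t := range (m + 1))]
  · refine sum_congr rfl fun j _ => ?_
    rw [filter_filter, nonnegPathCount]
    congr 1
    ext v
    simp only [mem_filter, mem_univ, true_and, zero_add]
    constructor
    · rintro ⟨h, rfl⟩
      exact ⟨h, (Int.toNat_of_nonneg (h m le_rfl)).symm⟩
    · rintro ⟨h, hj⟩
      exact ⟨h, by simp [hj]⟩
  · intro v _
    simpa [Nat.lt_succ_iff] using height_self_le v

theorem card_nonneg_paths (m : ℕ) :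
    #{v : Fin m → Bool | ∀ k ≤ m, 0 ≤ height v k} = m.choose ((m + 1) / 2) := by
  rw [card_nonneg_eq_sum, ← Nat.cast_inj (R := ℤ)]
  push_cast
  set g : ℕ → ℤ := fun j => pathCount m j + pathCount m (j + 1)
  calc ∑ j ∈ range (m + 1), (nonnegPathCount m 0 j : ℤ)
      = ∑ j ∈ range (m + 1), (g j - g (j + 1)) := sum_congr rfl fun j _ => by
        rw [nonnegPathCount_eq_sub m (by norm_num) (by positivity)]
        simp only [g]
        push_cast
        ring_nf
    _ = pathCount m 0 + pathCount m 1 := by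
        rw [sum_range_sub']
        simp only [g]
        push_cast
        rw [pathCount_eq_zero (d := m + 1 + 1) (by omega),
          pathCount_eq_zero (d := m + 1) (by omega)]
        simp
    _ = _ := by exact_mod_cast pathCount_zero_add_pathCount_one m

theorem card_pos_paths_succ (m : ℕ) :
    #{v : Fin (m + 1) → Bool | ∀ k ∈ Icc 1 (m + 1), 0 < height v k} =
      #{w : Fin m → Bool | ∀ k ≤ m, 0 ≤ height w k} := by
  have hdown (w : Fin m → Bool) : ¬∀ k ∈ Icc 1 (m + 1), 0 < height (Fin.cons false w) k :=
    fun h => by simpa [step] using h 1 (by simp)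
  have hup (w : Fin m → Bool) : (∀ k ∈ Icc 1 (m + 1), 0 < height (Fin.cons true w) k) ↔
      ∀ k ≤ m, 0 ≤ height w k := by
    constructor
    · intro h k hk
      simpa [step, Int.lt_iff_add_one_le, add_comm] using h (k + 1) (by simp [hk])
    · intro h k hk
      obtain ⟨k, rfl⟩ : ∃ j, k = j + 1 := ⟨k - 1, by simp at hk; omega⟩
      simp only [height_cons, step, if_true]
      linarith [h k (by simp at hk; omega)]
  simp only [card_filter_fin_succ, hup, hdown, filter_false, card_empty, add_zero]

end Paths

section Walk

variable {m : ℕ} {Ω : Type*} {X : ℕ → Ω → ℝ}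

noncomputable def signs (X : ℕ → Ω → ℝ) (m : ℕ) (ω : Ω) : Fin m → Bool :=
  fun i => X (i + 1) ω = 1

lemma signs_preimage_singleton (v : Fin m → Bool) :
    signs X m ⁻¹' {v} =
      ⋂ i ∈ (univ : Finset (Fin m)), X (i + 1) ⁻¹' {x | decide (x = 1) = v i} := by
  ext ω
  simp [signs, funext_iff]

variable [MeasurableSpace Ω] {μ : Measure Ω} [IsProbabilityMeasure μ]

lemma measurableSet_decide_eq_one (b : Bool) : MeasurableSet {x : ℝ | decide (x = 1) = b} := by
  cases b
  · convert (measurableSet_singleton (1 : ℝ)).compl using 1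
    ext
    simp
  · simp

lemma measure_decide_eq_one (hmeas : ∀ i, Measurable (X i))
    (hX : ∀ i, μ {ω | X i ω = 1} = 1 / 2) (i : ℕ) (b : Bool) :
    μ (X i ⁻¹' {x | decide (x = 1) = b}) = 2⁻¹ := by
  have h1 : μ (X i ⁻¹' {1}) = 2⁻¹ := by rw [← one_div]; exact hX i
  cases b
  · rw [show X i ⁻¹' {x | decide (x = 1) = false} = (X i ⁻¹' {1})ᶜ by ext; simp,
      prob_compl_eq_one_sub (hmeas i (measurableSet_singleton 1)), h1, ENNReal.one_sub_inv_two]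
  · rw [show X i ⁻¹' {x | decide (x = 1) = true} = X i ⁻¹' {1} by ext; simp, h1]

lemma measurableSet_signs_preimage_singleton (hmeas : ∀ i, Measurable (X i))
    (v : Fin m → Bool) :
    MeasurableSet (signs X m ⁻¹' {v}) := by
  rw [signs_preimage_singleton]
  exact Finset.measurableSet_biInter _ fun i _ => hmeas _ (measurableSet_decide_eq_one (v i))

lemma measure_signs_preimage_singleton (hmeas : ∀ i, Measurable (X i)) (hindep : iIndepFun X μ)
    (hX : ∀ i, μ {ω | X i ω = 1} = 1 / 2) (v : Fin m → Bool) :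
    μ (signs X m ⁻¹' {v}) = 2⁻¹ ^ m := by
  have hind := hindep.precomp (g := fun i : Fin m => (i : ℕ) + 1)
    fun i j h => Fin.ext (by simpa using h)
  rw [signs_preimage_singleton,
    hind.measure_inter_preimage_eq_mul _ fun i _ => measurableSet_decide_eq_one (v i),
    prod_congr rfl fun (i : Fin m) _ => measure_decide_eq_one hmeas hX (i + 1) (v i)]
  simp

lemma ae_eq_one_or_eq_neg_one (hmeas : ∀ i, Measurable (X i))
    (hstep : ∀ i, μ {ω | X i ω = 1} = 1 / 2 ∧ μ {ω | X i ω = -1} = 1 / 2) (i : ℕ) :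
    ∀ᵐ ω ∂μ, X i ω = 1 ∨ X i ω = -1 := by
  have hdisj : Disjoint {ω | X i ω = 1} {ω | X i ω = -1} :=
    Set.disjoint_left.2 fun ω (h1 : X i ω = 1) (h2 : X i ω = -1) => by norm_num [h1] at h2
  have hmeas1 : MeasurableSet {ω | X i ω = 1} := hmeas i (measurableSet_singleton 1)
  have hmeas2 : MeasurableSet {ω | X i ω = -1} := hmeas i (measurableSet_singleton (-1))
  have hcompl :
      {ω | ¬(X i ω = 1 ∨ X i ω = -1)} = ({ω | X i ω = 1} ∪ {ω | X i ω = -1})ᶜ := by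
    ext
    simp
  rw [ae_iff, hcompl, prob_compl_eq_zero_iff (hmeas1.union hmeas2), measure_union hdisj hmeas2,
    (hstep i).1, (hstep i).2, ENNReal.add_halves]

lemma sum_filter_fin_lt {M : Type*} [AddCommMonoid M] (f : ℕ → M) {k : ℕ} (hk : k ≤ m) :
    ∑ i ∈ (univ.filter fun i : Fin m => (i : ℕ) < k), f i = ∑ i ∈ range k, f i := by
  rw [sum_filter, Fin.sum_univ_eq_sum_range (fun i => if i < k then f i else 0), ← sum_filter]
  congr 1
  ext i
  simp only [mem_filter, mem_range]
  omega

lemma ae_walkSum_eq_height (hmeas : ∀ i, Measurable (X i))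
    (hstep : ∀ i, μ {ω | X i ω = 1} = 1 / 2 ∧ μ {ω | X i ω = -1} = 1 / 2) (m : ℕ) :
    ∀ᵐ ω ∂μ, ∀ k ≤ m, walkSum X k ω = height (signs X m ω) k := by
  filter_upwards [ae_all_iff.2 (ae_eq_one_or_eq_neg_one hmeas hstep)] with ω hω k hk
  simp only [walkSum, height, signs, Int.cast_sum]
  rw [sum_filter_fin_lt (fun i => (step (X (i + 1) ω = 1) : ℝ)) hk]
  refine sum_congr rfl fun i _ => ?_
  rcases hω (i + 1) with h | h <;> norm_num [h, step]

lemma measure_forall_walkSum (hmeas : ∀ i, Measurable (X i)) (hindep : iIndepFun X μ)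
    (hstep : ∀ i, μ {ω | X i ω = 1} = 1 / 2 ∧ μ {ω | X i ω = -1} = 1 / 2)
    (R : ℝ → Prop) (s : Finset (Fin m → Bool))
    (hs : ∀ v, v ∈ s ↔ ∀ k ∈ Icc 1 m, R (height v k)) :
    μ {ω | ∀ k ∈ Icc 1 m, R (walkSum X k ω)} = #s * 2⁻¹ ^ m := by
  have hae : {ω | ∀ k ∈ Icc 1 m, R (walkSum X k ω)} =ᵐ[μ] signs X m ⁻¹' s := by
    refine Filter.eventuallyEq_set.2 ?_
    filter_upwards [ae_walkSum_eq_height hmeas hstep m] with ω hω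
    rw [Set.mem_preimage, mem_coe, hs]
    exact forall₂_congr fun k hk => by rw [hω k (mem_Icc.1 hk).2]
  rw [measure_congr hae, ← sum_measure_preimage_singleton _ fun v _ =>
    measurableSet_signs_preimage_singleton hmeas v]
  simp [measure_signs_preimage_singleton hmeas hindep fun i => (hstep i).1]

lemma forall_mem_Icc_cast_height_nonneg_iff (v : Fin m → Bool) :
    (∀ k ∈ Icc 1 m, (0 : ℝ) ≤ height v k) ↔ ∀ k ≤ m, 0 ≤ height v k := by
  refine ⟨fun h k hk => ?_, fun h k hk => by exact_mod_cast h k (mem_Icc.1 hk).2⟩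
  rcases k.eq_zero_or_pos with rfl | hk0
  · simp
  · exact_mod_cast h k (mem_Icc.2 ⟨hk0, hk⟩)

end Walk

section StayProbabilities

variable {Ω : Type*} [MeasurableSpace Ω] {μ : Measure Ω} [IsProbabilityMeasure μ]
  {X : ℕ → Ω → ℝ}

lemma toReal_natCast_mul_inv_two_pow (n m : ℕ) :
    ((n : ENNReal) * 2⁻¹ ^ m).toReal = n / 2 ^ m := by
  simp [div_eq_mul_inv]

lemma stayNonneg_eq (hmeas : ∀ i, Measurable (X i)) (hindep : iIndepFun X μ)
    (hstep : ∀ i, μ {ω | X i ω = 1} = 1 / 2 ∧ μ {ω | X i ω = -1} = 1 / 2) (m : ℕ) :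
    stayNonneg μ X m = m.choose ((m + 1) / 2) / 2 ^ m := by
  rw [stayNonneg, measure_forall_walkSum hmeas hindep hstep (0 ≤ ·)
    (univ.filter fun v : Fin m → Bool => ∀ k ≤ m, 0 ≤ height v k)
    fun v => (mem_filter_univ v).trans (forall_mem_Icc_cast_height_nonneg_iff v).symm,
    card_nonneg_paths, toReal_natCast_mul_inv_two_pow]

lemma stayPos_succ (hmeas : ∀ i, Measurable (X i)) (hindep : iIndepFun X μ)
    (hstep : ∀ i, μ {ω | X i ω = 1} = 1 / 2 ∧ μ {ω | X i ω = -1} = 1 / 2) (m : ℕ) :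
    stayPos μ X (m + 1) = stayNonneg μ X m / 2 := by
  rw [stayPos, stayNonneg, measure_forall_walkSum hmeas hindep hstep (0 < ·)
    (univ.filter fun v : Fin (m + 1) → Bool => ∀ k ∈ Icc 1 (m + 1), 0 < height v k)
    fun v => by simp, measure_forall_walkSum hmeas hindep hstep (0 ≤ ·)
    (univ.filter fun v : Fin m → Bool => ∀ k ≤ m, 0 ≤ height v k)
    fun v => (mem_filter_univ v).trans (forall_mem_Icc_cast_height_nonneg_iff v).symm,
    card_pos_paths_succ, toReal_natCast_mul_inv_two_pow, toReal_natCast_mul_inv_two_pow, pow_succ]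
  ring

lemma four_pow_mul_poch_half (n : ℕ) : 4 ^ n * poch (1 / 2) n = n.centralBinom * n.factorial := by
  induction n with
  | zero => simp [poch]
  | succ n ih =>
    have h : ((n + 1 : ℕ) : ℝ) * (n + 1).centralBinom = 2 * (2 * n + 1) * n.centralBinom := by
      exact_mod_cast Nat.succ_mul_centralBinom_succ n
    rw [poch, prod_range_succ, ← poch, Nat.factorial_succ, Nat.cast_mul]
    push_cast at h ⊢
    linear_combination (2 + 4 * (n : ℝ)) * ih - (n.factorial : ℝ) * h

lemma stayNonneg_two_mul (hmeas : ∀ i, Measurable (X i)) (hindep : iIndepFun X μ)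
    (hstep : ∀ i, μ {ω | X i ω = 1} = 1 / 2 ∧ μ {ω | X i ω = -1} = 1 / 2) (n : ℕ) :
    stayNonneg μ X (2 * n) = poch (1 / 2) n / n.factorial := by
  rw [stayNonneg_eq hmeas hindep hstep, show (2 * n + 1) / 2 = n by omega,
    ← Nat.centralBinom_eq_two_mul_choose, pow_mul, div_eq_div_iff (by positivity) (by positivity)]
  norm_num
  linear_combination -(four_pow_mul_poch_half n)

lemma stayNonneg_two_mul_sub_one (hmeas : ∀ i, Measurable (X i)) (hindep : iIndepFun X μ)
    (hstep : ∀ i, μ {ω | X i ω = 1} = 1 / 2 ∧ μ {ω | X i ω = -1} = 1 / 2)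
    {n : ℕ} (hn : 1 ≤ n) :
    stayNonneg μ X (2 * n - 1) = stayNonneg μ X (2 * n) := by
  obtain ⟨k, rfl⟩ : ∃ k, n = k + 1 := ⟨n - 1, by omega⟩
  have hchoose : (2 * (k + 1)).choose (k + 1) = 2 * (2 * k + 1).choose (k + 1) := by
    rw [show 2 * (k + 1) = 2 * k + 1 + 1 by ring, Nat.choose_succ_succ, Nat.choose_symm_half]
    ring
  rw [stayNonneg_eq hmeas hindep hstep, stayNonneg_eq hmeas hindep hstep,
    show 2 * (k + 1) - 1 = 2 * k + 1 by omega, show (2 * k + 1 + 1) / 2 = k + 1 by omega,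
    show (2 * (k + 1) + 1) / 2 = k + 1 by omega, hchoose, show 2 * (k + 1) = 2 * k + 1 + 1 by ring,
    pow_succ]
  push_cast
  field_simp
  ring

end StayProbabilities

end SimpleRandomWalk

open SimpleRandomWalk

theorem ssrw_stay_probabilities_general
    {Ω : Type*} [MeasurableSpace Ω] (μ : MeasureTheory.Measure Ω) [IsProbabilityMeasure μ]
    (X : ℕ → Ω → ℝ) (hmeas : ∀ i, Measurable (X i))
    (hindep : iIndepFun X μ)
    (hstep : ∀ i, μ {ω | X i ω = 1} = 1 / 2 ∧ μ {ω | X i ω = -1} = 1 / 2) :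
    ∀ n, 1 ≤ n →
      stayPos μ X (2 * n) = poch (1 / 2) n / (2 * Nat.factorial n)
      ∧ stayPos μ X (2 * n + 1) = poch (1 / 2) n / (2 * Nat.factorial n)
      ∧ stayNonneg μ X (2 * n - 1) = poch (1 / 2) n / Nat.factorial n
      ∧ stayNonneg μ X (2 * n) = poch (1 / 2) n / Nat.factorial n := by
  intro n hn
  have heven := stayNonneg_two_mul hmeas hindep hstep n
  have hodd := (stayNonneg_two_mul_sub_one hmeas hindep hstep hn).trans heven
  refine ⟨?_, ?_, hodd, heven⟩
  · rw [← Nat.sub_add_cancel (by omega : 1 ≤ 2 * n), stayPos_succ hmeas hindep hstep, hodd]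
    ring
  · rw [stayPos_succ hmeas hindep hstep, heven]
    ring

/-- (Feller) For the simple symmetric random walk, for every `n ≥ 1`:
`p̃_{2n} = p̃_{2n+1} = (1/2)_{n↑}/(2 n!)` and `p_{2n-1} = p_{2n} = (1/2)_{n↑}/n!`. -/
theorem ssrw_stay_probabilities
    {Ω : Type*} [MeasurableSpace Ω] (μ : MeasureTheory.Measure Ω) [IsProbabilityMeasure μ]
    (X : ℕ → Ω → ℝ) (hmeas : ∀ i, Measurable (X i))
    (hindep : iIndepFun X μ)
    (hident : ∀ i, IdentDistrib (X i) (X 1) μ μ)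
    (hstep : ∀ i, μ {ω | X i ω = 1} = 1 / 2 ∧ μ {ω | X i ω = -1} = 1 / 2) :
    ∀ n, 1 ≤ n →
      stayPos μ X (2 * n) = poch (1 / 2) n / (2 * Nat.factorial n)
      ∧ stayPos μ X (2 * n + 1) = poch (1 / 2) n / (2 * Nat.factorial n)
      ∧ stayNonneg μ X (2 * n - 1) = poch (1 / 2) n / Nat.factorial n
      ∧ stayNonneg μ X (2 * n) = poch (1 / 2) n / Nat.factorial n :=
  ssrw_stay_probabilities_general μ X hmeas hindep hstep
end
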